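/- Let G be an abelian group that is strongly non-divisible (no proper quotient is divisible). Then the torsion-free rank r₀(G) of G is finite. -/

import Mathlib

/-- The subgroup mG = {m•x : x ∈ G} of an abelian group G. -/
def nsmulRange (G : Type*) [AddCommGroup G] (m : ℕ) : AddSubgroup G :=
  (m • AddMonoidHom.id G).range

/-- The first Ulm subgroup G¹ = ⋂_{m ≥ 1} mG. -/
def ulm (G : Type*) [AddCommGroup G] : AddSubgroup G :=
  ⨅ m ∈ Set.Ioi (0 : ℕ), nsmulRange G m

/-!
Suppose `G` has infinite torsion-free rank. Then `G` contains a free abelian group `F` of countably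
infinite rank, and `F` maps onto `ℚ`. Since `ℚ` is divisible, hence injective, this surjection
extends to a surjection `g : G → ℚ`. Its kernel is a proper subgroup with `G ⧸ ker g ≅ ℚ`
divisible, contradicting strong non-divisibility.
-/

section nsmulRange

variable {A B : Type*} [AddCommGroup A] [AddCommGroup B]

theorem mem_nsmulRange {m : ℕ} {x : A} : x ∈ nsmulRange A m ↔ ∃ y, m • y = x := by
  simp [nsmulRange]

theorem nsmulRange_eq_top_iff {m : ℕ} : nsmulRange A m = ⊤ ↔ ∀ x : A, ∃ y, m • y = x := by
  simp only [AddSubgroup.eq_top_iff', mem_nsmulRange]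

theorem nsmulRange_eq_top_of_divisibleBy [DivisibleBy A ℤ] {m : ℕ} (hm : m ≠ 0) :
    nsmulRange A m = ⊤ := by
  refine nsmulRange_eq_top_iff.2 fun x => ?_
  obtain ⟨y, hy⟩ := DivisibleBy.surjective_smul A ℤ (Int.natCast_ne_zero.2 hm) x
  exact ⟨y, by simpa only [natCast_zsmul] using hy⟩

theorem nsmulRange_eq_top_of_surjective {f : A →+ B} (hf : Function.Surjective f) {m : ℕ}
    (hA : nsmulRange A m = ⊤) : nsmulRange B m = ⊤ := by
  refine nsmulRange_eq_top_iff.2 fun x => ?_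
  obtain ⟨a, rfl⟩ := hf x
  obtain ⟨y, rfl⟩ := nsmulRange_eq_top_iff.1 hA a
  exact ⟨f y, (map_nsmul f m y).symm⟩

end nsmulRange

theorem exists_injective_finsupp_nat_of_aleph0_le_rank {R M : Type*} [CommRing R] [IsDomain R]
    [AddCommGroup M] [Module R M] (h : Cardinal.aleph0 ≤ Module.rank R M) :
    ∃ i : (ℕ →₀ R) →ₗ[R] M, Function.Injective i := by
  obtain ⟨s, hs, hli⟩ := exists_set_linearIndependent_of_isDomain R M
  have : Infinite s := Cardinal.infinite_iff.2 (hs ▸ h)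
  let e := Infinite.natEmbedding s
  exact ⟨Finsupp.linearCombination R (Subtype.val ∘ e), hli.comp e e.injective⟩

theorem exists_surjective_of_aleph0_le_rank {G Q : Type*} [AddCommGroup G] [AddCommGroup Q]
    [DivisibleBy Q ℤ] [Countable Q] (h : Cardinal.aleph0 ≤ Module.rank ℤ G) :
    ∃ g : G →+ Q, Function.Surjective g := by
  obtain ⟨i, hi⟩ := exists_injective_finsupp_nat_of_aleph0_le_rank h
  obtain ⟨q, hq⟩ := exists_surjective_nat Q
  let f := Finsupp.linearCombination ℤ q
  obtain ⟨g, hg⟩ := (Module.Baer.of_divisible Q).extension_property i hi f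
  refine ⟨g.toAddMonoidHom, fun x => ?_⟩
  obtain ⟨y, rfl⟩ := Finsupp.linearCombination_surjective ℤ hq x
  exact ⟨i y, LinearMap.congr_fun hg y⟩

/-- A strongly non-divisible abelian group has finite torsion-free rank. -/
theorem finite_rank_of_strongly_nondivisible (G : Type*) [AddCommGroup G]
    (h : ∀ H : AddSubgroup G, H ≠ ⊤ → ¬ (∀ m : ℕ, 0 < m → nsmulRange (G ⧸ H) m = ⊤)) :
    Module.rank ℤ G < Cardinal.aleph0 := by
  by_contra! hrank
  obtain ⟨g, hg⟩ := exists_surjective_of_aleph0_le_rank (Q := ℚ) hrank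
  have hker : g.ker ≠ ⊤ := by
    rw [Ne, AddMonoidHom.ker_eq_top_iff]
    rintro rfl
    obtain ⟨x, hx⟩ := hg 1
    exact zero_ne_one hx
  refine h g.ker hker fun m hm => ?_
  exact nsmulRange_eq_top_of_surjective
    (f := (QuotientAddGroup.quotientKerEquivOfSurjective g hg).symm.toAddMonoidHom)
    (AddEquiv.surjective _)
    (nsmulRange_eq_top_of_divisibleBy hm.ne')
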